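/- arXiv:1905.01894 — 2 statements merged into one kernel-verified Lean document; each statement's English description precedes it below -/
import Mathlib

section
/- If the binomial market (B, S, b) with a non-trivial filtration (some 0 < p_{n₀} < 1) admits no arbitrage strategy, then |μ − r| < σ. -/
/-- The binomial sample space at time `n`: binary words of length `n`. -/
abbrev Bn (n : ℕ) := Fin n → Bool

/-- The product binomial weight: `P_n({d₁…d_n}) = ∏ p_i^{d_i}(1-p_i)^{1-d_i}`. -/
def wP (p : ℕ → ℝ) (n : ℕ) (a : Bn n) : ℝ :=
  ∏ i : Fin n, if a i then p i else 1 - p i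

/-- The probability of a set of paths under the weight `wP p n`. -/
noncomputable def Pr (p : ℕ → ℝ) (n : ℕ) (A : Set (Bn n)) : ℝ :=
  ∑ a : Bn n, A.indicator (wP p n) a

/-- `ξ_{n+1}(d₁…d_{n+1}) = 2 d_{n+1} - 1`. -/
def xi (n : ℕ) (e : Bn (n + 1)) : ℝ :=
  2 * (if e (Fin.last n) then 1 else 0) - 1

/-- The gain process of a strategy `(φ, ψ)`, where `φ n, ψ n : Bn n → ℝ`
represent the paper's `φ_{n+1}, ψ_{n+1} : B_n → ℝ`, the stock is `S` and the
bond is `b_n = (1+r)^n`. -/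
def gain (f : ∀ n, Bn (n + 1) → Bn n) (S : ∀ n, Bn n → ℝ) (r : ℝ)
    (φ ψ : ∀ n, Bn n → ℝ) : ∀ n, Bn n → ℝ
  | 0 => fun a => -(S 0 a * φ 0 a + ψ 0 a)
  | (n + 1) => fun e =>
      (S (n + 1) e * φ n (f n e) + (1 + r) ^ (n + 1) * ψ n (f n e))
        - (S (n + 1) e * φ (n + 1) e + (1 + r) ^ (n + 1) * ψ (n + 1) e)

lemma wP_snoc (p : ℕ → ℝ) (n : ℕ) (a : Bn n) (b : Bool) :
    wP p (n + 1) (Fin.snoc a b) = wP p n a * (if b then p n else 1 - p n) := by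
  unfold wP
  rw [Fin.prod_univ_castSucc]
  simp [Fin.snoc_castSucc]

lemma sum_snoc (n : ℕ) (F : Bn (n + 1) → ℝ) :
    ∑ e : Bn (n + 1), F e = ∑ x : Bool × Bn n, F (Fin.snoc x.2 x.1) := by
  rw [← Equiv.sum_comp (Fin.snocEquiv (fun _ => Bool))]
  rfl

lemma sum_wP (p : ℕ → ℝ) : ∀ n, ∑ a : Bn n, wP p n a = 1 := by
  intro n
  induction n with
  | zero => simp [wP]
  | succ n ih =>
    rw [sum_snoc, Fintype.sum_prod_type]
    simp only [wP_snoc]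
    rw [Fintype.sum_bool, ← Finset.sum_add_distrib]
    norm_num [← mul_add, ih]

lemma wP_nonneg (p : ℕ → ℝ) (hp : ∀ i, 0 ≤ p i ∧ p i ≤ 1) (n : ℕ) (a : Bn n) :
    0 ≤ wP p n a := by
  apply Finset.prod_nonneg
  intro i _
  by_cases h : a i <;> simp [h, (hp i).1, sub_nonneg.mpr (hp i).2]

lemma Pr_univ (p : ℕ → ℝ) (n : ℕ) : Pr p n Set.univ = 1 := by
  simp [Pr, sum_wP]

lemma Pr_mono (p : ℕ → ℝ) (hp : ∀ i, 0 ≤ p i ∧ p i ≤ 1) (n : ℕ)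
    {A B : Set (Bn n)} (hAB : A ⊆ B) : Pr p n A ≤ Pr p n B := by
  apply Finset.sum_le_sum
  intro a _
  exact Set.indicator_le_indicator_of_subset hAB (fun x => wP_nonneg p hp n x) a

lemma Pr_last (p : ℕ → ℝ) (n : ℕ) (b : Bool) :
    Pr p (n + 1) {e : Bn (n + 1) | e (Fin.last n) = b} =
      (if b then p n else 1 - p n) := by
  unfold Pr
  rw [sum_snoc, Fintype.sum_prod_type]
  have key : ∀ c : Bool, ∀ a : Bn n,
      ({e : Bn (n + 1) | e (Fin.last n) = b}).indicator (wP p (n + 1))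
        (Fin.snoc a c) =
      (if c = b then wP p n a * (if c then p n else 1 - p n) else 0) := by
    intro c a
    by_cases h : c = b
    · rw [Set.indicator_of_mem (by simp [h]), wP_snoc, if_pos h]
    · rw [Set.indicator_of_notMem (by simp [h]), if_neg h]
  simp only [key]
  rw [Fintype.sum_bool]
  cases b <;> simp [← Finset.sum_mul, sum_wP]

/-- If the binomial market with a non-trivial filtration admits no arbitrage
strategy, then `|μ - r| < σ`. -/
theorem no_arbitrage_implies_mu_r_sigma
    (p : ℕ → ℝ) (hp : ∀ i, 0 ≤ p i ∧ p i ≤ 1)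
    (f : ∀ n, Bn (n + 1) → Bn n)
    -- the filtration maps are null-preserving
    (hfnull : ∀ n (A : Set (Bn n)), Pr p n A = 0 → Pr p (n + 1) (f n ⁻¹' A) = 0)
    -- non-triviality: some digit has a genuinely random outcome
    (hnontriv : ∃ i, 0 < p i ∧ p i < 1)
    (μ σ r s₀ : ℝ) (hσ : σ > 0) (hμ : μ > σ - 1) (hr : r > -1) (hs₀ : s₀ > 0)
    (S : ∀ n, Bn n → ℝ)
    (hS0 : ∀ a, S 0 a = s₀)
    (hSsucc : ∀ n (e : Bn (n + 1)), S (n + 1) e = S n (f n e) * (1 + μ + σ * xi n e))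
    -- no arbitrage: there is no strategy with a.s. nonnegative gains and a
    -- strictly positive gain with positive probability at some time
    (hNA : ¬ ∃ φ ψ : ∀ n, Bn n → ℝ,
        (∀ n, Pr p n {x | 0 ≤ gain f S r φ ψ n x} = 1) ∧
        (∃ n₀, 0 < Pr p n₀ {x | 0 < gain f S r φ ψ n₀ x})) :
    |μ - r| < σ := by
  by_contra habs
  push_neg at habs
  -- |μ - r| ≥ σ, so either σ ≤ μ - r or μ - r ≤ -σ
  obtain ⟨i, hpi0, hpi1⟩ := hnontriv
  -- the direction of the trade
  set t : ℝ := if σ ≤ μ - r then 1 else -1 with ht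
  have hxi : ∀ n (e : Bn (n + 1)), xi n e = 1 ∨ xi n e = -1 := by
    intro n e
    unfold xi
    by_cases h : e (Fin.last n) <;> simp [h] <;> norm_num
  have h1r : (0:ℝ) < 1 + r := by linarith
  have hret : ∀ n (e : Bn (n + 1)), 0 < 1 + μ + σ * xi n e := by
    intro n e
    rcases hxi n e with h | h <;> rw [h] <;> nlinarith
  have hSpos : ∀ n (a : Bn n), 0 < S n a := by
    intro n
    induction n with
    | zero => intro a; rw [hS0]; exact hs₀
    | succ n ih =>
      intro e
      rw [hSsucc]
      exact mul_pos (ih _) (hret n e)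
  -- key sign facts
  have hsgn : ∀ x : ℝ, x = 1 ∨ x = -1 → 0 ≤ t * (μ - r + σ * x) := by
    intro x hx
    by_cases hc : σ ≤ μ - r
    · rw [ht, if_pos hc]
      rcases hx with h | h <;> rw [h] <;> nlinarith
    · have hc' : μ - r ≤ -σ := by
        rcases le_abs.mp habs with h | h
        · exact absurd h hc
        · linarith
      rw [ht, if_neg hc]
      rcases hx with h | h <;> rw [h] <;> nlinarith
  have hc'' : ¬ σ ≤ μ - r → μ - r ≤ -σ := by
    intro hc
    rcases le_abs.mp habs with h | h
    · exact absurd h hc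
    · linarith
  -- the arbitrage strategy
  set φ : ∀ n, Bn n → ℝ := fun n a => if n = i then t / S n a else 0 with hφ
  set ψ : ∀ n, Bn n → ℝ := fun n a => if n = i then -t / (1 + r) ^ n else 0 with hψ
  have hg0 : ∀ a, gain f S r φ ψ 0 a = 0 := by
    intro a
    show -(S 0 a * φ 0 a + ψ 0 a) = 0
    by_cases h0 : 0 = i
    · have hSne : S 0 a ≠ 0 := (hSpos 0 a).ne'
      simp only [hφ, hψ, if_pos h0]
      field_simp
      ring
    · simp [hφ, hψ, h0]
  have hgsucc : ∀ n (e : Bn (n + 1)),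
      gain f S r φ ψ (n + 1) e = if n = i then t * (μ - r + σ * xi n e) else 0 := by
    intro n e
    show (S (n + 1) e * φ n (f n e) + (1 + r) ^ (n + 1) * ψ n (f n e))
        - (S (n + 1) e * φ (n + 1) e + (1 + r) ^ (n + 1) * ψ (n + 1) e) = _
    by_cases hn : n = i
    · have hn1 : ¬ (n + 1 = i) := by omega
      have hSne : S n (f n e) ≠ 0 := (hSpos n (f n e)).ne'
      have h1rne : (1 + r) ^ n ≠ 0 := pow_ne_zero n h1r.ne'
      simp only [hφ, hψ, if_pos hn, if_neg hn1]
      rw [hSsucc]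
      field_simp
      ring
    · by_cases hn1 : n + 1 = i
      · have hSne : S (n + 1) e ≠ 0 := (hSpos (n + 1) e).ne'
        have h1rne : (1 + r) ^ (n + 1) ≠ 0 := pow_ne_zero (n + 1) h1r.ne'
        simp only [hφ, hψ, if_pos hn1, if_neg hn]
        field_simp
        ring
      · simp [hφ, hψ, hn, hn1]
  apply hNA
  refine ⟨φ, ψ, ?_, ⟨i + 1, ?_⟩⟩
  · intro n
    have : {x | 0 ≤ gain f S r φ ψ n x} = Set.univ := by
      apply Set.eq_univ_of_forall
      intro x
      cases n with
      | zero => simp only [Set.mem_setOf_eq, hg0]; exact le_refl 0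
      | succ n =>
        simp only [Set.mem_setOf_eq, hgsucc]
        by_cases hn : n = i
        · rw [if_pos hn]
          exact hsgn _ (hxi n x)
        · rw [if_neg hn]
    rw [this, Pr_univ]
  · set b : Bool := decide (σ ≤ μ - r) with hb
    have hsub : {e : Bn (i + 1) | e (Fin.last i) = b} ⊆
        {x | 0 < gain f S r φ ψ (i + 1) x} := by
      intro e he
      simp only [Set.mem_setOf_eq] at he ⊢
      rw [hgsucc, if_pos rfl]
      have hxie : xi i e = 2 * (if b then 1 else 0) - 1 := by
        unfold xi; rw [he]
      by_cases hc : σ ≤ μ - r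
      · have hb' : b = true := by simp [hb, hc]
        rw [hxie, hb', ht, if_pos hc]
        norm_num
        linarith
      · have hb' : b = false := by simp [hb, hc]
        have hc' := hc'' hc
        rw [hxie, hb', ht, if_neg hc]
        norm_num
        linarith
    calc (0:ℝ) < if b then p i else 1 - p i := by
              by_cases hc : b = true <;> simp [hc] <;> linarith
      _ = Pr p (i + 1) {e : Bn (i + 1) | e (Fin.last i) = b} := (Pr_last p i b).symm
      _ ≤ Pr p (i + 1) {x | 0 < gain f S r φ ψ (i + 1) x} := Pr_mono p hp (i + 1) hsub
end

section
/- Martingale characterization of the discounted stock: the discounted stock process S'_n = b_n⁻¹ S_n satisfies E^{g_n}(S'_{n+1}) = S'_n for all n if and only if for all n and all a ∈ B_n, Q_n({a}) = c₁ Q_{n+1}(I_n(1,a)) + c₀ Q_{n+1}(I_n(0,a)), where I_n(j,a) = {e ∈ f_n⁻¹(a) : last digit of e is j}, c₁ = (1+μ+σ)/(1+r), c₀ = (1+μ−σ)/(1+r). -/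
/-- `I_n(j, a)`: the elements of `f_n⁻¹(a)` whose last digit is `j`. -/
def In (n : ℕ) (f : Bn (n + 1) → Bn n) (j : Bool) (a : Bn n) : Finset (Bn (n + 1)) :=
  Finset.univ.filter (fun e => f e = a ∧ e (Fin.last n) = j)

/-- Martingale characterization of the discounted stock process: the discounted
stock `S'_n = (1+r)^{-n} S_n` is a martingale along the filtration maps `f_n`
with respect to the measures `Q_n` if and only if
`Q_n({a}) = c₁ Q_{n+1}(I_n(1,a)) + c₀ Q_{n+1}(I_n(0,a))` for all `n`, `a`. -/
theorem discounted_stock_martingale_iff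
    (Q : ∀ n, Bn n → ℝ)
    (hQ : ∀ n, (∀ a, 0 ≤ Q n a) ∧ ∑ a : Bn n, Q n a = 1)
    (f : ∀ n, Bn (n + 1) → Bn n)
    -- the filtration maps are null-preserving w.r.t. the `Q`'s
    (hfnull : ∀ n (a : Bn n), Q n a = 0 → ∀ e, f n e = a → Q (n + 1) e = 0)
    (μ σ r s₀ : ℝ) (hσ : σ > 0) (hμ : μ > σ - 1) (hr : r > -1) (hs₀ : s₀ > 0)
    (S : ∀ n, Bn n → ℝ)
    (hS0 : ∀ a, S 0 a = s₀)
    (hSsucc : ∀ n (e : Bn (n + 1)), S (n + 1) e = S n (f n e) * (1 + μ + σ * xi n e))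
    -- the discounted stock process
    (S' : ∀ n, Bn n → ℝ)
    (hS' : ∀ n a, S' n a = S n a / (1 + r) ^ n) :
    -- `E^{g_n}(S'_{n+1}) = S'_n` for all `n` (pointwise form of the
    -- conditional expectation on the finite space) ...
    (∀ n (a : Bn n),
        S' n a * Q n a = ∑ e ∈ Finset.univ.filter (fun e => f n e = a),
          S' (n + 1) e * Q (n + 1) e)
      ↔
    -- ... iff the measures satisfy the risk-neutral recursion
    (∀ n (a : Bn n),
        Q n a = ((1 + μ + σ) / (1 + r)) * (∑ e ∈ In n (f n) true a, Q (n + 1) e)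
              + ((1 + μ - σ) / (1 + r)) * (∑ e ∈ In n (f n) false a, Q (n + 1) e)) := by
  have h1r : (1 : ℝ) + r ≠ 0 := by linarith
  have hSpos : ∀ n (a : Bn n), 0 < S n a := by
    intro n
    induction n with
    | zero => intro a; rw [hS0]; exact hs₀
    | succ n ih =>
      intro e
      rw [hSsucc]
      apply mul_pos (ih _)
      unfold xi
      by_cases h : e (Fin.last n)
      · simp [h]; linarith
      · simp [h]; linarith
  have key : ∀ n (a : Bn n),
      (S' n a * Q n a = ∑ e ∈ Finset.univ.filter (fun e => f n e = a),
          S' (n + 1) e * Q (n + 1) e) ↔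
      (Q n a = ((1 + μ + σ) / (1 + r)) * (∑ e ∈ In n (f n) true a, Q (n + 1) e)
              + ((1 + μ - σ) / (1 + r)) * (∑ e ∈ In n (f n) false a, Q (n + 1) e)) := by
    intro n a
    have hsplit : (∑ e ∈ Finset.univ.filter (fun e => f n e = a),
          S' (n + 1) e * Q (n + 1) e)
        = (∑ e ∈ In n (f n) true a, S' (n + 1) e * Q (n + 1) e)
        + (∑ e ∈ In n (f n) false a, S' (n + 1) e * Q (n + 1) e) := by
      rw [← Finset.sum_filter_add_sum_filter_not
        (Finset.univ.filter (fun e => f n e = a)) (fun e => e (Fin.last n) = true)]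
      unfold In
      rw [Finset.filter_filter, Finset.filter_filter]
      congr 1
      apply Finset.sum_congr _ (fun _ _ => rfl)
      apply Finset.filter_congr
      intro e _
      simp
    have htrue : (∑ e ∈ In n (f n) true a, S' (n + 1) e * Q (n + 1) e)
        = (S n a * (1 + μ + σ) / (1 + r) ^ (n + 1)) *
          ∑ e ∈ In n (f n) true a, Q (n + 1) e := by
      rw [Finset.mul_sum]
      apply Finset.sum_congr rfl
      intro e he
      simp only [In, Finset.mem_filter] at he
      rw [hS', hSsucc, he.2.1]
      simp only [xi, he.2.2, if_true, Bool.false_eq_true, if_false]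
      ring
    have hfalse : (∑ e ∈ In n (f n) false a, S' (n + 1) e * Q (n + 1) e)
        = (S n a * (1 + μ - σ) / (1 + r) ^ (n + 1)) *
          ∑ e ∈ In n (f n) false a, Q (n + 1) e := by
      rw [Finset.mul_sum]
      apply Finset.sum_congr rfl
      intro e he
      simp only [In, Finset.mem_filter] at he
      rw [hS', hSsucc, he.2.1]
      simp only [xi, he.2.2, if_true, Bool.false_eq_true, if_false]
      ring
    rw [hsplit, htrue, hfalse, hS']
    set T := ∑ e ∈ In n (f n) true a, Q (n + 1) e
    set F := ∑ e ∈ In n (f n) false a, Q (n + 1) e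
    have hK : S n a ≠ 0 := ne_of_gt (hSpos n a)
    have hp : ((1 : ℝ) + r) ^ n ≠ 0 := pow_ne_zero _ h1r
    constructor
    · intro h
      have h2 : S n a / (1 + r) ^ n * Q n a
          = S n a / (1 + r) ^ n *
            ((1 + μ + σ) / (1 + r) * T + (1 + μ - σ) / (1 + r) * F) := by
        rw [h]; field_simp; ring
      exact mul_left_cancel₀ (div_ne_zero hK hp) h2
    · intro h
      rw [h]; field_simp; ring
  constructor
  · intro h n a; exact (key n a).mp (h n a)
  · intro h n a; exact (key n a).mpr (h n a)
end
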